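/- (Error bound on the optimal value of the approximate bi-attribute UPRO problem; the instance of Theorem 5.2(i) for simple ψ, as in the Example following Theorem 5.2.) Let Z be a nonempty set, K a positive integer, p₁,…,p_K ≥ 0 with Σ_k p_k = 1, and for each k let f_k : Z → T be a map into T. Assume 𝒰_N^c is nonempty. Define ϑ := sup_{z ∈ Z} inf_{u ∈ 𝒰^c} Σ_{k=1}^K p_k u(f_k(z)) and ϑ_N := sup_{z ∈ Z} inf_{u ∈ 𝒰_N^c} Σ_{k=1}^K p_k u(f_k(z)). Then |ϑ − ϑ_N| ≤ 3L(β₁ + β₂), where β₁ := max_{1≤i≤N₁−1}(x_{i+1}−x_i) and β₂ := max_{1≤j≤N₂−1}(y_{j+1}−y_j). -/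

import Mathlib

open Finset Set
open scoped Classical

noncomputable section

/-- Lower-triangle linear piece of the Type-1 PLA over cell `(i,j)`. -/
def u1l (x y : ℕ → ℝ) (u : ℕ → ℕ → ℝ) (i j : ℕ) (p q : ℝ) : ℝ :=
  ((x (i + 1) - p) / (x (i + 1) - x i)) * u i j
    + ((p - x i) / (x (i + 1) - x i) - (q - y j) / (y (j + 1) - y j)) * u (i + 1) j
    + ((q - y j) / (y (j + 1) - y j)) * u (i + 1) (j + 1)

/-- Upper-triangle linear piece of the Type-1 PLA over cell `(i,j)`. -/
def u1u (x y : ℕ → ℝ) (u : ℕ → ℕ → ℝ) (i j : ℕ) (p q : ℝ) : ℝ :=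
  ((y (j + 1) - q) / (y (j + 1) - y j)) * u i j
    + ((q - y j) / (y (j + 1) - y j) - (p - x i) / (x (i + 1) - x i)) * u i (j + 1)
    + ((p - x i) / (x (i + 1) - x i)) * u (i + 1) (j + 1)

/-- Membership in the half-open interval `X_i` (closed at the left end for `i = 1`). -/
def memX (x : ℕ → ℝ) (i : ℕ) (p : ℝ) : Prop :=
  if i = 1 then x 1 ≤ p ∧ p ≤ x 2 else x i < p ∧ p ≤ x (i + 1)

/-- Membership in the cell `T_{i,j} = X_i × Y_j`. -/
def memCell (x y : ℕ → ℝ) (i j : ℕ) (p q : ℝ) : Prop :=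
  memX x i p ∧ memX y j q

/-- The Type-1 piecewise linear function built from the grid values `u i j`. -/
def uPL (N₁ N₂ : ℕ) (x y : ℕ → ℝ) (u : ℕ → ℕ → ℝ) (p q : ℝ) : ℝ :=
  ∑ i ∈ Finset.Icc 1 (N₁ - 1), ∑ j ∈ Finset.Icc 1 (N₂ - 1),
    if memCell x y i j p q then
      (if (q - y j) * (x (i + 1) - x i) ≤ (p - x i) * (y (j + 1) - y j)
        then u1l x y u i j p q else u1u x y u i j p q)
    else 0


/-- Membership in the class `𝒰`: continuous, componentwise non-decreasing, `[0,1]`-valued,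
normalized utility functions on `T` satisfying the conservative property and ℓ¹-Lipschitz
continuity with modulus `L`. -/
def memU (N₁ N₂ : ℕ) (x y : ℕ → ℝ) (L : ℝ) (u : ℝ → ℝ → ℝ) : Prop :=
  ContinuousOn (fun pq : ℝ × ℝ => u pq.1 pq.2)
      (Set.Icc (x 1) (x N₁) ×ˢ Set.Icc (y 1) (y N₂)) ∧
  (∀ p p' q q', p ∈ Set.Icc (x 1) (x N₁) → p' ∈ Set.Icc (x 1) (x N₁) →
    q ∈ Set.Icc (y 1) (y N₂) → q' ∈ Set.Icc (y 1) (y N₂) →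
    p ≤ p' → q ≤ q' → u p q ≤ u p' q') ∧
  (∀ p ∈ Set.Icc (x 1) (x N₁), ∀ q ∈ Set.Icc (y 1) (y N₂), u p q ∈ Set.Icc (0 : ℝ) 1) ∧
  u (x 1) (y 1) = 0 ∧ u (x N₁) (y N₂) = 1 ∧
  (∀ a b c d : ℝ, x 1 ≤ a → a ≤ b → b ≤ x N₁ → y 1 ≤ c → c ≤ d → d ≤ y N₂ →
    u a c + u b d ≤ u a d + u b c) ∧
  (∀ p p' q q', p ∈ Set.Icc (x 1) (x N₁) → p' ∈ Set.Icc (x 1) (x N₁) →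
    q ∈ Set.Icc (y 1) (y N₂) → q' ∈ Set.Icc (y 1) (y N₂) →
    |u p q - u p' q'| ≤ L * (|p - p'| + |q - q'|))

/-- Membership in the ambiguity set `𝒰^c`: members of `𝒰` satisfying the linear gridpoint
constraints (the form taken by the Lebesgue–Stieltjes constraints when each `ψ_l` is a simple
function constant on the cells). -/
def memUc (N₁ N₂ M : ℕ) (x y : ℕ → ℝ) (L : ℝ) (a : ℕ → ℕ → ℕ → ℝ) (c : ℕ → ℝ)
    (u : ℝ → ℝ → ℝ) : Prop :=
  memU N₁ N₂ x y L u ∧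
  ∀ l ∈ Finset.Icc 1 M,
    ∑ i ∈ Finset.Icc 1 N₁, ∑ j ∈ Finset.Icc 1 N₂, a l i j * u (x i) (y j) ≤ c l

/-- Membership in `𝒰_N^c`: members of `𝒰^c` that coincide on `T` with the Type-1 piecewise
linear function built from their own gridpoint values. -/
def memUNc (N₁ N₂ M : ℕ) (x y : ℕ → ℝ) (L : ℝ) (a : ℕ → ℕ → ℕ → ℝ) (c : ℕ → ℝ)
    (u : ℝ → ℝ → ℝ) : Prop :=
  memUc N₁ N₂ M x y L a c u ∧
  ∀ p ∈ Set.Icc (x 1) (x N₁), ∀ q ∈ Set.Icc (y 1) (y N₂),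
    u p q = uPL N₁ N₂ x y (fun i j => u (x i) (y j)) p q


/-! The interpolation map `u ↦ uPL (grid values of u)` sends `𝒰^c` into `𝒰_N^c` and moves
each `u` by at most `L (β₁ + β₂)` in sup norm. Since `u` is submodular, on every closed cell
its Type-1 interpolant is the maximum of the two affine pieces; in that form monotonicity, the
Lipschitz bound and submodularity are checked on one cell and glue along the grid, and the
interpolant keeps the grid values, hence the constraints. On a cell, `u` and its interpolant
both lie between the values of `u` at the lower-left and upper-right corners. As
`𝒰_N^c ⊆ 𝒰^c`, the inner infima differ by at most `L (β₁ + β₂)`, and so do the suprema. -/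

/-- The affine interpolant of the values `A`, `B`, `C` at `(0,0)`, `(1,0)`, `(1,1)`. -/
def triInterp (A B C s t : ℝ) : ℝ := (1 - s) * A + (s - t) * B + t * C

/-- Type-1 interpolation on the unit square of the corner values `A = (0,0)`, `B = (1,0)`,
`E = (0,1)`, `C = (1,1)`, written as the maximum of its two affine pieces, which is correct
when `A + C ≤ B + E`. -/
def squareInterp (A B E C s t : ℝ) : ℝ := max (triInterp A B C s t) (triInterp A E C t s)

section squareInterp

variable {A B E C s t : ℝ}

lemma triInterp_sub_triInterp (A B E C s t : ℝ) :
    triInterp A B C s t - triInterp A E C t s = (s - t) * (B + E - A - C) := by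
  unfold triInterp; ring

lemma squareInterp_comm : squareInterp A B E C s t = squareInterp A E B C t s :=
  max_comm _ _

lemma squareInterp_of_le (hD : A + C ≤ B + E) (h : t ≤ s) :
    squareInterp A B E C s t = triInterp A B C s t :=
  max_eq_left <| by
    nlinarith [triInterp_sub_triInterp A B E C s t, mul_nonneg (sub_nonneg.2 h)
      (show 0 ≤ B + E - A - C by linarith)]

lemma squareInterp_zero_left (hD : A + C ≤ B + E) (ht : 0 ≤ t) :
    squareInterp A B E C 0 t = (1 - t) * A + t * E := by
  rw [squareInterp_comm, squareInterp_of_le (by linarith) ht, triInterp]; ring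

lemma squareInterp_one_left (hD : A + C ≤ B + E) (ht : t ≤ 1) :
    squareInterp A B E C 1 t = (1 - t) * B + t * C := by
  rw [squareInterp_of_le hD ht, triInterp]; ring

lemma monotone_squareInterp_left (hAB : A ≤ B) (hEC : E ≤ C) :
    Monotone fun s => squareInterp A B E C s t :=
  Monotone.max (fun s s' h => by simp only [triInterp]; nlinarith)
    (fun s s' h => by simp only [triInterp]; nlinarith)

lemma monotone_mul_sub_squareInterp_left {K : ℝ} (hB : B ≤ A + K) (hC : C ≤ E + K) :
    Monotone fun s => K * s - squareInterp A B E C s t := by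
  intro s s' h
  have hl : triInterp A B C s' t ≤ triInterp A B C s t + K * (s' - s) := by
    simp only [triInterp]; nlinarith
  have hu : triInterp A E C t s' ≤ triInterp A E C t s + K * (s' - s) := by
    simp only [triInterp]; nlinarith
  have := max_le_max hl hu
  rw [max_add_add_right] at this
  simp only [squareInterp]
  linarith

lemma max_zero_add_max_zero_le {a b c d : ℝ} (hsum : b + c = a + d) (hb : b ≤ d) (hc : c ≤ d) :
    max 0 b + max 0 c ≤ max 0 a + max 0 d := by
  rcases le_total b 0 with hb0 | hb0 <;> rcases le_total c 0 with hc0 | hc0 <;>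
    simp only [max_eq_left, max_eq_right, hb0, hc0] <;>
    linarith [le_max_left 0 a, le_max_right 0 a, le_max_left 0 d, le_max_right 0 d]

/-- Up to the affine `triInterp A B C s t`, the interpolant is `max 0 ((t - s) (B + E - A - C))`,
a convex function of `t - s`. -/
lemma squareInterp_add_squareInterp_le (hD : A + C ≤ B + E) {s' t' : ℝ} (hs : s ≤ s')
    (ht : t ≤ t') :
    squareInterp A B E C s t + squareInterp A B E C s' t' ≤
      squareInterp A B E C s t' + squareInterp A B E C s' t := by
  have key : ∀ s t, squareInterp A B E C s t =
      triInterp A B C s t + max 0 ((t - s) * (B + E - A - C)) := fun s t => by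
    rw [squareInterp, ← max_add_add_left, add_zero]
    congr 1; unfold triInterp; ring
  simp only [key]
  have hF : 0 ≤ B + E - A - C := by linarith
  have := max_zero_add_max_zero_le (a := (t - s') * (B + E - A - C))
    (b := (t - s) * (B + E - A - C)) (c := (t' - s') * (B + E - A - C))
    (d := (t' - s) * (B + E - A - C)) (by ring) (by nlinarith) (by nlinarith)
  have : triInterp A B C s t + triInterp A B C s' t' =
      triInterp A B C s t' + triInterp A B C s' t := by unfold triInterp; ring
  linarith

end squareInterp

section nodes

variable {x : ℕ → ℝ} {N i i' : ℕ} {p : ℝ}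

lemma strictMonoOn_Icc_of_lt_succ {α : Type*} [Preorder α] {f : ℕ → α} {m n : ℕ}
    (hf : ∀ i, m ≤ i → i < n → f i < f (i + 1)) : StrictMonoOn f (Set.Icc m n) := by
  rintro a ⟨ha, -⟩ b ⟨-, hb⟩ hab
  induction b, hab using Nat.le_induction with
  | base => exact hf a ha (by omega)
  | succ b hab ih => exact (ih (by omega)).trans (hf b (by omega) (by omega))

lemma StrictMonoOn.lt_succ {α : Type*} [Preorder α] {f : ℕ → α} {m n : ℕ}
    (hf : StrictMonoOn f (Set.Icc m n)) (hi : m ≤ i) (hin : i < n) : f i < f (i + 1) :=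
  hf ⟨hi, by omega⟩ ⟨by omega, hin⟩ (Nat.lt_succ_self i)

lemma monotoneOn_Icc_of_monotoneOn_Icc_succ {α β : Type*} [LinearOrder α] [Preorder β]
    {f : ℕ → α} {φ : α → β} {m n : ℕ} (hmn : m ≤ n) (hf : MonotoneOn f (Set.Icc m n))
    (hφ : ∀ i, m ≤ i → i < n → MonotoneOn φ (Set.Icc (f i) (f (i + 1)))) :
    MonotoneOn φ (Set.Icc (f m) (f n)) := by
  induction n, hmn using Nat.le_induction with
  | base => exact Set.Subsingleton.monotoneOn (f := φ) (Set.subsingleton_Icc_of_ge le_rfl)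
  | succ n hmn ih =>
    have hfm : f m ≤ f n := hf ⟨le_rfl, by omega⟩ ⟨hmn, by omega⟩ hmn
    have hfn : f n ≤ f (n + 1) := hf ⟨hmn, by omega⟩ ⟨by omega, le_rfl⟩ (by omega)
    rw [← Set.Icc_union_Icc_eq_Icc hfm hfn]
    exact (ih (hf.mono (Set.Icc_subset_Icc_right (by omega))) fun i hi hin => hφ i hi (by omega))
      |>.union_right (hφ n hmn (by omega)) (isGreatest_Icc hfm) (isLeast_Icc hfn)

lemma memX_mem_Icc (h : memX x i p) : p ∈ Set.Icc (x i) (x (i + 1)) := by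
  unfold memX at h
  split_ifs at h with h1
  · subst h1; exact h
  · exact ⟨h.1.le, h.2⟩

lemma exists_memX (hN : 2 ≤ N) (hx : StrictMonoOn x (Set.Icc 1 N))
    (hp : p ∈ Set.Icc (x 1) (x N)) : ∃ i, 1 ≤ i ∧ i < N ∧ memX x i p := by
  induction N, hN using Nat.le_induction with
  | base => exact ⟨1, le_rfl, by omega, by simpa [memX] using hp⟩
  | succ n hn ih =>
    rcases le_or_gt p (x n) with h | h
    · obtain ⟨i, hi, hin, hmem⟩ := ih (hx.mono (Set.Icc_subset_Icc_right (by omega))) ⟨hp.1, h⟩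
      exact ⟨i, hi, by omega, hmem⟩
    · refine ⟨n, by omega, by omega, ?_⟩
      rw [memX, if_neg (by omega)]
      exact ⟨h, hp.2⟩

lemma exists_mem_Icc_succ (hN : 2 ≤ N) (hx : StrictMonoOn x (Set.Icc 1 N))
    (hp : p ∈ Set.Icc (x 1) (x N)) : ∃ i, 1 ≤ i ∧ i < N ∧ p ∈ Set.Icc (x i) (x (i + 1)) :=
  let ⟨i, hi, hiN, hmem⟩ := exists_memX hN hx hp
  ⟨i, hi, hiN, memX_mem_Icc hmem⟩

lemma memX_unique (hx : StrictMonoOn x (Set.Icc 1 N)) (hi : 1 ≤ i) (hi' : 1 ≤ i')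
    (hiN : i < N) (hi'N : i' < N) (h : memX x i p) (h' : memX x i' p) : i = i' := by
  wlog hlt : i < i' generalizing i i'
  · rcases (not_lt.1 hlt).lt_or_eq with hlt | heq
    · exact (this hi' hi hi'N hiN h' h hlt).symm
    · exact heq.symm
  have hle : x (i + 1) ≤ x i' := hx.monotoneOn ⟨by omega, by omega⟩ ⟨hi', hi'N.le⟩ hlt
  rw [memX, if_neg (by omega)] at h'
  linarith [(memX_mem_Icc h).2, h'.1]

lemma eq_succ_of_mem_Icc_succ_of_lt (hx : StrictMonoOn x (Set.Icc 1 N)) (hi : 1 ≤ i)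
    (hi'N : i' < N) (hlt : i < i') (hp : p ∈ Set.Icc (x i) (x (i + 1)))
    (hp' : p ∈ Set.Icc (x i') (x (i' + 1))) : i' = i + 1 ∧ p = x (i + 1) := by
  have hle : x (i + 1) ≤ x i' := hx.monotoneOn ⟨by omega, by omega⟩ ⟨by omega, by omega⟩ hlt
  have hpx : p = x (i + 1) := le_antisymm hp.2 (hle.trans hp'.1)
  refine ⟨hx.injOn ⟨by omega, by omega⟩ ⟨by omega, by omega⟩ ?_, hpx⟩
  linarith [hp'.1]

end nodes

def cellInterp (x y : ℕ → ℝ) (g : ℕ → ℕ → ℝ) (i j : ℕ) (p q : ℝ) : ℝ :=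
  squareInterp (g i j) (g (i + 1) j) (g i (j + 1)) (g (i + 1) (j + 1))
    ((p - x i) / (x (i + 1) - x i)) ((q - y j) / (y (j + 1) - y j))

section cellInterp

variable {x y : ℕ → ℝ} {g : ℕ → ℕ → ℝ} {i j : ℕ} {p q : ℝ}

lemma cellInterp_swap : cellInterp y x (Function.swap g) j i q p = cellInterp x y g i j p q :=
  squareInterp_comm.symm

lemma monotone_div_sub {a b : ℝ} (hab : a < b) : Monotone fun p => (p - a) / (b - a) :=
  fun _ _ h => div_le_div_of_nonneg_right (by linarith) (by linarith)

lemma div_sub_mem_Icc {a b : ℝ} (hab : a < b) (hp : p ∈ Set.Icc a b) :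
    (p - a) / (b - a) ∈ Set.Icc (0 : ℝ) 1 :=
  ⟨div_nonneg (by linarith [hp.1]) (by linarith), (div_le_one (by linarith)).2 (by linarith [hp.2])⟩

lemma ite_u1l_u1u_eq_cellInterp (hxi : x i < x (i + 1)) (hyj : y j < y (j + 1))
    (hD : g i j + g (i + 1) (j + 1) ≤ g (i + 1) j + g i (j + 1)) :
    (if (q - y j) * (x (i + 1) - x i) ≤ (p - x i) * (y (j + 1) - y j)
      then u1l x y g i j p q else u1u x y g i j p q) = cellInterp x y g i j p q := by
  have hdx : x (i + 1) - x i ≠ 0 := by linarith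
  have hdy : y (j + 1) - y j ≠ 0 := by linarith
  have hl : u1l x y g i j p q = triInterp (g i j) (g (i + 1) j) (g (i + 1) (j + 1))
      ((p - x i) / (x (i + 1) - x i)) ((q - y j) / (y (j + 1) - y j)) := by
    simp only [u1l, triInterp]; field_simp; ring
  have hu : u1u x y g i j p q = triInterp (g i j) (g i (j + 1)) (g (i + 1) (j + 1))
      ((q - y j) / (y (j + 1) - y j)) ((p - x i) / (x (i + 1) - x i)) := by
    simp only [u1u, triInterp]; field_simp; ring
  split_ifs with h <;> rw [← div_le_div_iff₀ (by linarith) (by linarith)] at h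
  · rw [hl, cellInterp, squareInterp_of_le hD h]
  · rw [hu, cellInterp, squareInterp_comm, squareInterp_of_le (by linarith) (not_le.1 h).le]

lemma cellInterp_succ_left (hxi : x i < x (i + 1)) (hyj : y j < y (j + 1))
    (hq : q ∈ Set.Icc (y j) (y (j + 1)))
    (hD : g i j + g (i + 1) (j + 1) ≤ g (i + 1) j + g i (j + 1))
    (hD' : g (i + 1) j + g (i + 1 + 1) (j + 1) ≤ g (i + 1 + 1) j + g (i + 1) (j + 1)) :
    cellInterp x y g (i + 1) j (x (i + 1)) q = cellInterp x y g i j (x (i + 1)) q := by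
  have ht := div_sub_mem_Icc hyj hq
  rw [cellInterp, cellInterp, sub_self, zero_div, div_self (by linarith),
    squareInterp_zero_left hD' ht.1, squareInterp_one_left hD ht.2]

lemma cellInterp_node {a b : ℕ} (ha : a ≤ 1) (hb : b ≤ 1) (hxi : x i < x (i + 1))
    (hyj : y j < y (j + 1)) (hD : g i j + g (i + 1) (j + 1) ≤ g (i + 1) j + g i (j + 1)) :
    cellInterp x y g i j (x (i + a)) (y (j + b)) = g (i + a) (j + b) := by
  have hx1 : (x (i + 1) - x i) / (x (i + 1) - x i) = 1 := div_self (by linarith)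
  have hy1 : (y (j + 1) - y j) / (y (j + 1) - y j) = 1 := div_self (by linarith)
  interval_cases a <;> interval_cases b <;>
    simp only [cellInterp, add_zero, sub_self, zero_div, hx1, hy1,
      squareInterp_zero_left hD zero_le_one, squareInterp_zero_left hD le_rfl,
      squareInterp_one_left hD zero_le_one, squareInterp_one_left hD le_rfl] <;> ring

lemma monotone_cellInterp_left (hxi : x i < x (i + 1)) (h0 : g i j ≤ g (i + 1) j)
    (h1 : g i (j + 1) ≤ g (i + 1) (j + 1)) : Monotone fun p => cellInterp x y g i j p q :=
  (monotone_squareInterp_left h0 h1).comp (monotone_div_sub hxi)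

lemma monotone_mul_sub_cellInterp_left {L : ℝ} (hxi : x i < x (i + 1))
    (h0 : g (i + 1) j ≤ g i j + L * (x (i + 1) - x i))
    (h1 : g (i + 1) (j + 1) ≤ g i (j + 1) + L * (x (i + 1) - x i)) :
    Monotone fun p => L * p - cellInterp x y g i j p q := by
  intro p p' hpp'
  have hdx : x (i + 1) - x i ≠ 0 := by linarith
  have key := (monotone_mul_sub_squareInterp_left (t := (q - y j) / (y (j + 1) - y j)) h0 h1
    |>.comp (monotone_div_sub hxi)) hpp'
  have hlin : ∀ p, L * p = L * (x (i + 1) - x i) * ((p - x i) / (x (i + 1) - x i)) + L * x i :=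
    fun p => by field_simp; ring
  simp only [Function.comp, cellInterp] at key ⊢
  rw [hlin p, hlin p']
  linarith

lemma monotone_cellInterp_sub_cellInterp (hxi : x i < x (i + 1)) (hyj : y j < y (j + 1))
    (hD : g i j + g (i + 1) (j + 1) ≤ g (i + 1) j + g i (j + 1)) {p' : ℝ} (hpp' : p ≤ p') :
    Monotone fun q => cellInterp x y g i j p q - cellInterp x y g i j p' q := by
  intro q q' hqq'
  have := squareInterp_add_squareInterp_le hD (monotone_div_sub hxi hpp') (monotone_div_sub hyj hqq')
  simp only [cellInterp]
  linarith

end cellInterp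

def GridSubmodular (N₁ N₂ : ℕ) (g : ℕ → ℕ → ℝ) : Prop :=
  ∀ i j, 1 ≤ i → i < N₁ → 1 ≤ j → j < N₂ → g i j + g (i + 1) (j + 1) ≤ g (i + 1) j + g i (j + 1)

def GridIncrBounded (N₁ N₂ : ℕ) (x : ℕ → ℝ) (L : ℝ) (g : ℕ → ℕ → ℝ) : Prop :=
  ∀ i j, 1 ≤ i → i < N₁ → 1 ≤ j → j ≤ N₂ →
    g i j ≤ g (i + 1) j ∧ g (i + 1) j ≤ g i j + L * (x (i + 1) - x i)

lemma GridSubmodular.swap {N₁ N₂ : ℕ} {g : ℕ → ℕ → ℝ} (hg : GridSubmodular N₁ N₂ g) :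
    GridSubmodular N₂ N₁ (Function.swap g) := fun j i hj hjN hi hiN => by
  simpa only [Function.swap, add_comm (g i (j + 1))] using hg i j hi hiN hj hjN

lemma abs_sub_le_of_monotoneOn {f : ℝ → ℝ} {s : Set ℝ} {L p p' : ℝ} (hf : MonotoneOn f s)
    (hLf : MonotoneOn (fun p => L * p - f p) s) (hp : p ∈ s) (hp' : p' ∈ s) :
    |f p - f p'| ≤ L * |p - p'| := by
  wlog h : p ≤ p' generalizing p p'
  · rw [abs_sub_comm, abs_sub_comm p]; exact this hp' hp (le_of_not_ge h)
  rw [abs_of_nonpos (sub_nonpos.2 (hf hp hp' h)), abs_of_nonpos (sub_nonpos.2 h)]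
  linarith [hLf hp hp' h]

section uPL

variable {N₁ N₂ : ℕ} {x y : ℕ → ℝ} {g : ℕ → ℕ → ℝ} {i j : ℕ} {p q : ℝ}

lemma Icc_succ_subset_Icc {N : ℕ} (hx : StrictMonoOn x (Set.Icc 1 N)) (hi : 1 ≤ i)
    (hiN : i < N) : Set.Icc (x i) (x (i + 1)) ⊆ Set.Icc (x 1) (x N) :=
  Set.Icc_subset_Icc (hx.monotoneOn.mapsTo_Icc ⟨hi, hiN.le⟩).1
    (hx.monotoneOn.mapsTo_Icc ⟨by omega, hiN⟩).2

lemma uPL_eq_of_memX (hx : StrictMonoOn x (Set.Icc 1 N₁)) (hy : StrictMonoOn y (Set.Icc 1 N₂))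
    (hi : 1 ≤ i) (hiN : i < N₁) (hj : 1 ≤ j) (hjN : j < N₂) (hp : memX x i p)
    (hq : memX y j q) :
    uPL N₁ N₂ x y g p q = if (q - y j) * (x (i + 1) - x i) ≤ (p - x i) * (y (j + 1) - y j)
      then u1l x y g i j p q else u1u x y g i j p q := by
  rw [uPL, Finset.sum_eq_single_of_mem i (Finset.mem_Icc.2 ⟨hi, by omega⟩),
    Finset.sum_eq_single_of_mem j (Finset.mem_Icc.2 ⟨hj, by omega⟩), if_pos ⟨hp, hq⟩]
  · intro j' hj' hne
    rw [Finset.mem_Icc] at hj'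
    exact if_neg fun h => hne (memX_unique hy hj'.1 hj (by omega) hjN h.2 hq)
  · intro i' hi' hne
    rw [Finset.mem_Icc] at hi'
    exact Finset.sum_eq_zero fun j' _ =>
      if_neg fun h => hne (memX_unique hx hi'.1 hi (by omega) hiN h.1 hp)

lemma cellInterp_eq_of_mem_Icc_succ (hx : StrictMonoOn x (Set.Icc 1 N₁))
    (hy : StrictMonoOn y (Set.Icc 1 N₂)) (hg : GridSubmodular N₁ N₂ g) {i' : ℕ} (hi : 1 ≤ i)
    (hi' : 1 ≤ i') (hiN : i < N₁) (hi'N : i' < N₁) (hj : 1 ≤ j) (hjN : j < N₂)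
    (hp : p ∈ Set.Icc (x i) (x (i + 1))) (hp' : p ∈ Set.Icc (x i') (x (i' + 1)))
    (hq : q ∈ Set.Icc (y j) (y (j + 1))) :
    cellInterp x y g i j p q = cellInterp x y g i' j p q := by
  wlog hlt : i < i' generalizing i i'
  · rcases (not_lt.1 hlt).lt_or_eq with hlt | rfl
    · exact (this hi' hi hi'N hiN hp' hp hlt).symm
    · rfl
  obtain ⟨rfl, rfl⟩ := eq_succ_of_mem_Icc_succ_of_lt hx hi hi'N hlt hp hp'
  exact (cellInterp_succ_left (hx.lt_succ hi hiN) (hy.lt_succ hj hjN) hq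
    (hg i j hi hiN hj hjN) (hg (i + 1) j hi' hi'N hj hjN)).symm

/-- The half-open cell containing `(p, q)` may be a neighbour of `(i, j)`; neighbouring
interpolants agree on their common edge. -/
lemma uPL_eq_cellInterp (hx : StrictMonoOn x (Set.Icc 1 N₁)) (hy : StrictMonoOn y (Set.Icc 1 N₂))
    (hg : GridSubmodular N₁ N₂ g) (hi : 1 ≤ i) (hiN : i < N₁) (hj : 1 ≤ j) (hjN : j < N₂)
    (hp : p ∈ Set.Icc (x i) (x (i + 1))) (hq : q ∈ Set.Icc (y j) (y (j + 1))) :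
    uPL N₁ N₂ x y g p q = cellInterp x y g i j p q := by
  obtain ⟨i₀, hi₀, hi₀N, hmi⟩ := exists_memX (by omega) hx (Icc_succ_subset_Icc hx hi hiN hp)
  obtain ⟨j₀, hj₀, hj₀N, hmj⟩ := exists_memX (by omega) hy (Icc_succ_subset_Icc hy hj hjN hq)
  rw [uPL_eq_of_memX hx hy hi₀ hi₀N hj₀ hj₀N hmi hmj, ite_u1l_u1u_eq_cellInterp
    (hx.lt_succ hi₀ hi₀N) (hy.lt_succ hj₀ hj₀N) (hg i₀ j₀ hi₀ hi₀N hj₀ hj₀N),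
    cellInterp_eq_of_mem_Icc_succ hx hy hg hi₀ hi hi₀N hiN hj₀ hj₀N (memX_mem_Icc hmi) hp
      (memX_mem_Icc hmj),
    ← cellInterp_swap, ← cellInterp_swap (i := i),
    cellInterp_eq_of_mem_Icc_succ hy hx hg.swap hj₀ hj hj₀N hjN hi hiN (memX_mem_Icc hmj) hq hp]

lemma uPL_swap (hN₁ : 2 ≤ N₁) (hN₂ : 2 ≤ N₂) (hx : StrictMonoOn x (Set.Icc 1 N₁))
    (hy : StrictMonoOn y (Set.Icc 1 N₂)) (hg : GridSubmodular N₁ N₂ g)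
    (hp : p ∈ Set.Icc (x 1) (x N₁)) (hq : q ∈ Set.Icc (y 1) (y N₂)) :
    uPL N₂ N₁ y x (Function.swap g) q p = uPL N₁ N₂ x y g p q := by
  obtain ⟨i, hi, hiN, hpi⟩ := exists_mem_Icc_succ hN₁ hx hp
  obtain ⟨j, hj, hjN, hqj⟩ := exists_mem_Icc_succ hN₂ hy hq
  rw [uPL_eq_cellInterp hy hx hg.swap hj hjN hi hiN hqj hpi, cellInterp_swap,
    uPL_eq_cellInterp hx hy hg hi hiN hj hjN hpi hqj]

lemma exists_eq_add_le_one {N n : ℕ} (hN : 2 ≤ N) (hn : 1 ≤ n) (hnN : n ≤ N) :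
    ∃ n' a, 1 ≤ n' ∧ n' < N ∧ a ≤ 1 ∧ n = n' + a := by
  rcases hnN.lt_or_eq with h | h
  · exact ⟨n, 0, hn, h, zero_le_one, rfl⟩
  · exact ⟨N - 1, 1, by omega, by omega, le_rfl, by omega⟩

lemma uPL_node (hN₁ : 2 ≤ N₁) (hN₂ : 2 ≤ N₂) (hx : StrictMonoOn x (Set.Icc 1 N₁))
    (hy : StrictMonoOn y (Set.Icc 1 N₂)) (hg : GridSubmodular N₁ N₂ g) (hi : 1 ≤ i)
    (hiN : i ≤ N₁) (hj : 1 ≤ j) (hjN : j ≤ N₂) : uPL N₁ N₂ x y g (x i) (y j) = g i j := by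
  obtain ⟨i', a, hi', hi'N, ha, rfl⟩ := exists_eq_add_le_one hN₁ hi hiN
  obtain ⟨j', b, hj', hj'N, hb, rfl⟩ := exists_eq_add_le_one hN₂ hj hjN
  rw [uPL_eq_cellInterp hx hy hg hi' hi'N hj' hj'N
    ((hx.monotoneOn.mono (Set.Icc_subset_Icc hi' hi'N)).mapsTo_Icc ⟨by omega, by omega⟩)
    ((hy.monotoneOn.mono (Set.Icc_subset_Icc hj' hj'N)).mapsTo_Icc ⟨by omega, by omega⟩)]
  exact cellInterp_node ha hb (hx.lt_succ hi' hi'N) (hy.lt_succ hj' hj'N)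
    (hg i' j' hi' hi'N hj' hj'N)

/-- The Lipschitz bound is phrased as monotonicity of `p ↦ L p - uPL p q` so that, like
monotonicity, it glues across cells. -/
lemma monotoneOn_uPL_left {L : ℝ} (hN₁ : 1 ≤ N₁) (hN₂ : 2 ≤ N₂)
    (hx : StrictMonoOn x (Set.Icc 1 N₁)) (hy : StrictMonoOn y (Set.Icc 1 N₂))
    (hg : GridSubmodular N₁ N₂ g) (hgx : GridIncrBounded N₁ N₂ x L g)
    (hq : q ∈ Set.Icc (y 1) (y N₂)) :
    MonotoneOn (fun p => uPL N₁ N₂ x y g p q) (Set.Icc (x 1) (x N₁)) ∧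
      MonotoneOn (fun p => L * p - uPL N₁ N₂ x y g p q) (Set.Icc (x 1) (x N₁)) := by
  obtain ⟨j, hj, hjN, hqj⟩ := exists_mem_Icc_succ hN₂ hy hq
  have hcell : ∀ i, 1 ≤ i → i < N₁ → ∀ p ∈ Set.Icc (x i) (x (i + 1)),
      cellInterp x y g i j p q = uPL N₁ N₂ x y g p q := fun i hi hiN p hp =>
    (uPL_eq_cellInterp hx hy hg hi hiN hj hjN hp hqj).symm
  constructor <;> refine monotoneOn_Icc_of_monotoneOn_Icc_succ hN₁ hx.monotoneOn
    fun i hi hiN => ?_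
  · refine ((monotone_cellInterp_left (hx.lt_succ hi hiN) ?_ ?_).monotoneOn _).congr
      (hcell i hi hiN)
    exacts [(hgx i j hi hiN hj hjN.le).1, (hgx i (j + 1) hi hiN (by omega) hjN).1]
  · refine ((monotone_mul_sub_cellInterp_left (hx.lt_succ hi hiN) ?_ ?_).monotoneOn _).congr
      fun p hp => congrArg (L * p - ·) (hcell i hi hiN p hp)
    exacts [(hgx i j hi hiN hj hjN.le).2, (hgx i (j + 1) hi hiN (by omega) hjN).2]

lemma monotoneOn_uPL_right {L : ℝ} (hN₁ : 2 ≤ N₁) (hN₂ : 2 ≤ N₂)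
    (hx : StrictMonoOn x (Set.Icc 1 N₁)) (hy : StrictMonoOn y (Set.Icc 1 N₂))
    (hg : GridSubmodular N₁ N₂ g) (hgy : GridIncrBounded N₂ N₁ y L (Function.swap g))
    (hp : p ∈ Set.Icc (x 1) (x N₁)) :
    MonotoneOn (fun q => uPL N₁ N₂ x y g p q) (Set.Icc (y 1) (y N₂)) ∧
      MonotoneOn (fun q => L * q - uPL N₁ N₂ x y g p q) (Set.Icc (y 1) (y N₂)) := by
  have hswap : ∀ q ∈ Set.Icc (y 1) (y N₂),
      uPL N₂ N₁ y x (Function.swap g) q p = uPL N₁ N₂ x y g p q := fun q hq =>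
    uPL_swap hN₁ hN₂ hx hy hg hp hq
  obtain ⟨hmono, hlip⟩ := monotoneOn_uPL_left (by omega) hN₁ hy hx hg.swap hgy hp
  exact ⟨hmono.congr hswap, hlip.congr fun q hq => congrArg (L * q - ·) (hswap q hq)⟩

end uPL

section uPLGlobal

variable {N₁ N₂ : ℕ} {x y : ℕ → ℝ} {g : ℕ → ℕ → ℝ} {L p p' q q' : ℝ}

lemma monotoneOn_uPL_sub_uPL_right (hN₂ : 2 ≤ N₂) (hx : StrictMonoOn x (Set.Icc 1 N₁))
    (hy : StrictMonoOn y (Set.Icc 1 N₂)) (hg : GridSubmodular N₁ N₂ g) {i : ℕ} (hi : 1 ≤ i)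
    (hiN : i < N₁) (hp : p ∈ Set.Icc (x i) (x (i + 1))) (hp' : p' ∈ Set.Icc (x i) (x (i + 1)))
    (hpp' : p ≤ p') :
    MonotoneOn (fun q => uPL N₁ N₂ x y g p q - uPL N₁ N₂ x y g p' q) (Set.Icc (y 1) (y N₂)) :=
  monotoneOn_Icc_of_monotoneOn_Icc_succ (by omega) hy.monotoneOn fun j hj hjN =>
    ((monotone_cellInterp_sub_cellInterp (hx.lt_succ hi hiN) (hy.lt_succ hj hjN)
      (hg i j hi hiN hj hjN) hpp').monotoneOn _).congr fun q hq => by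
        simp only [uPL_eq_cellInterp hx hy hg hi hiN hj hjN hp hq,
          uPL_eq_cellInterp hx hy hg hi hiN hj hjN hp' hq]

lemma uPL_add_uPL_le (hN₁ : 2 ≤ N₁) (hN₂ : 2 ≤ N₂) (hx : StrictMonoOn x (Set.Icc 1 N₁))
    (hy : StrictMonoOn y (Set.Icc 1 N₂)) (hg : GridSubmodular N₁ N₂ g) {a b c d : ℝ}
    (ha : x 1 ≤ a) (hab : a ≤ b) (hb : b ≤ x N₁) (hc : y 1 ≤ c) (hcd : c ≤ d) (hd : d ≤ y N₂) :
    uPL N₁ N₂ x y g a c + uPL N₁ N₂ x y g b d ≤ uPL N₁ N₂ x y g a d + uPL N₁ N₂ x y g b c := by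
  have hmono : MonotoneOn (fun p => uPL N₁ N₂ x y g p c - uPL N₁ N₂ x y g p d)
      (Set.Icc (x 1) (x N₁)) :=
    monotoneOn_Icc_of_monotoneOn_Icc_succ (by omega) hx.monotoneOn
      fun i hi hiN p hp p' hp' hpp' => by
        have := monotoneOn_uPL_sub_uPL_right hN₂ hx hy hg hi hiN hp hp' hpp'
          ⟨hc, hcd.trans hd⟩ ⟨hc.trans hcd, hd⟩ hcd
        dsimp only at this ⊢
        linarith
  have := hmono ⟨ha, hab.trans hb⟩ ⟨ha.trans hab, hb⟩ hab
  dsimp only at this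
  linarith

lemma uPL_le_uPL (hN₁ : 2 ≤ N₁) (hN₂ : 2 ≤ N₂) (hx : StrictMonoOn x (Set.Icc 1 N₁))
    (hy : StrictMonoOn y (Set.Icc 1 N₂)) (hg : GridSubmodular N₁ N₂ g)
    (hgx : GridIncrBounded N₁ N₂ x L g) (hgy : GridIncrBounded N₂ N₁ y L (Function.swap g))
    (hp : p ∈ Set.Icc (x 1) (x N₁)) (hp' : p' ∈ Set.Icc (x 1) (x N₁))
    (hq : q ∈ Set.Icc (y 1) (y N₂)) (hq' : q' ∈ Set.Icc (y 1) (y N₂)) (hpp' : p ≤ p')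
    (hqq' : q ≤ q') : uPL N₁ N₂ x y g p q ≤ uPL N₁ N₂ x y g p' q' :=
  ((monotoneOn_uPL_left (by omega) hN₂ hx hy hg hgx hq).1 hp hp' hpp').trans
    ((monotoneOn_uPL_right hN₁ hN₂ hx hy hg hgy hp').1 hq hq' hqq')

lemma abs_uPL_sub_uPL_le (hN₁ : 2 ≤ N₁) (hN₂ : 2 ≤ N₂) (hx : StrictMonoOn x (Set.Icc 1 N₁))
    (hy : StrictMonoOn y (Set.Icc 1 N₂)) (hg : GridSubmodular N₁ N₂ g)
    (hgx : GridIncrBounded N₁ N₂ x L g) (hgy : GridIncrBounded N₂ N₁ y L (Function.swap g))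
    (hp : p ∈ Set.Icc (x 1) (x N₁)) (hp' : p' ∈ Set.Icc (x 1) (x N₁))
    (hq : q ∈ Set.Icc (y 1) (y N₂)) (hq' : q' ∈ Set.Icc (y 1) (y N₂)) :
    |uPL N₁ N₂ x y g p q - uPL N₁ N₂ x y g p' q'| ≤ L * (|p - p'| + |q - q'|) := by
  obtain ⟨hx₁, hx₂⟩ := monotoneOn_uPL_left (by omega) hN₂ hx hy hg hgx hq
  obtain ⟨hy₁, hy₂⟩ := monotoneOn_uPL_right hN₁ hN₂ hx hy hg hgy hp'
  have h₁ := abs_sub_le_of_monotoneOn hx₁ hx₂ hp hp'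
  have h₂ := abs_sub_le_of_monotoneOn hy₁ hy₂ hq hq'
  linarith [abs_sub_le (uPL N₁ N₂ x y g p q) (uPL N₁ N₂ x y g p' q) (uPL N₁ N₂ x y g p' q')]

end uPLGlobal

lemma continuousOn_of_abs_sub_le {u : ℝ → ℝ → ℝ} {S T : Set ℝ} {L : ℝ} (hL : 0 ≤ L)
    (h : ∀ p p' q q', p ∈ S → p' ∈ S → q ∈ T → q' ∈ T →
      |u p q - u p' q'| ≤ L * (|p - p'| + |q - q'|)) :
    ContinuousOn (fun pq : ℝ × ℝ => u pq.1 pq.2) (S ×ˢ T) := by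
  refine (LipschitzOnWith.of_dist_le_mul (K := Real.toNNReal (2 * L)) ?_).continuousOn
  rintro ⟨p, q⟩ ⟨hp, hq⟩ ⟨p', q'⟩ ⟨hp', hq'⟩
  rw [Real.dist_eq, Prod.dist_eq, Real.dist_eq, Real.dist_eq, Real.coe_toNNReal _ (by positivity)]
  have := h p p' q q' hp hp' hq hq'
  nlinarith [le_max_left |p - p'| |q - q'|, le_max_right |p - p'| |q - q'|]

lemma uPL_congr {N₁ N₂ : ℕ} {x y : ℕ → ℝ} {g g' : ℕ → ℕ → ℝ} {p q : ℝ}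
    (h : ∀ i j, 1 ≤ i → i ≤ N₁ → 1 ≤ j → j ≤ N₂ → g i j = g' i j) :
    uPL N₁ N₂ x y g p q = uPL N₁ N₂ x y g' p q := by
  refine Finset.sum_congr rfl fun i hi => Finset.sum_congr rfl fun j hj => ?_
  rw [Finset.mem_Icc] at hi hj
  simp only [u1l, u1u, h i j (by omega) (by omega) (by omega) (by omega),
    h (i + 1) j (by omega) (by omega) (by omega) (by omega),
    h i (j + 1) (by omega) (by omega) (by omega) (by omega),
    h (i + 1) (j + 1) (by omega) (by omega) (by omega) (by omega)]

section memU

variable {N₁ N₂ M : ℕ} {x y : ℕ → ℝ} {L : ℝ} {a : ℕ → ℕ → ℕ → ℝ} {c : ℕ → ℝ}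
  {u : ℝ → ℝ → ℝ}

lemma gridSubmodular_of_memU (hx : StrictMonoOn x (Set.Icc 1 N₁))
    (hy : StrictMonoOn y (Set.Icc 1 N₂)) (hu : memU N₁ N₂ x y L u) :
    GridSubmodular N₁ N₂ fun i j => u (x i) (y j) := fun i j hi hiN hj hjN => by
  obtain ⟨-, -, -, -, -, hsub, -⟩ := hu
  have := hsub (x i) (x (i + 1)) (y j) (y (j + 1))
    (hx.monotoneOn.mapsTo_Icc ⟨hi, hiN.le⟩).1 (hx.lt_succ hi hiN).le
    (hx.monotoneOn.mapsTo_Icc ⟨by omega, hiN⟩).2 (hy.monotoneOn.mapsTo_Icc ⟨hj, hjN.le⟩).1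
    (hy.lt_succ hj hjN).le (hy.monotoneOn.mapsTo_Icc ⟨by omega, hjN⟩).2
  linarith

lemma gridIncrBounded_of_memU (hx : StrictMonoOn x (Set.Icc 1 N₁))
    (hy : StrictMonoOn y (Set.Icc 1 N₂)) (hu : memU N₁ N₂ x y L u) :
    GridIncrBounded N₁ N₂ x L (fun i j => u (x i) (y j)) ∧
      GridIncrBounded N₂ N₁ y L (Function.swap fun i j => u (x i) (y j)) := by
  obtain ⟨-, hmono, -, -, -, -, hlip⟩ := hu
  have hxi : ∀ {i}, 1 ≤ i → i ≤ N₁ → x i ∈ Set.Icc (x 1) (x N₁) := fun hi hiN =>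
    hx.monotoneOn.mapsTo_Icc ⟨hi, hiN⟩
  have hyj : ∀ {j}, 1 ≤ j → j ≤ N₂ → y j ∈ Set.Icc (y 1) (y N₂) := fun hj hjN =>
    hy.monotoneOn.mapsTo_Icc ⟨hj, hjN⟩
  refine ⟨fun i j hi hiN hj hjN => ⟨?_, ?_⟩, fun j i hj hjN hi hiN => ⟨?_, ?_⟩⟩
  · exact hmono _ _ _ _ (hxi hi hiN.le) (hxi (by omega) hiN) (hyj hj hjN) (hyj hj hjN)
      (hx.lt_succ hi hiN).le le_rfl
  · have := (abs_le.1 (hlip _ _ _ _ (hxi (by omega) hiN) (hxi hi hiN.le) (hyj hj hjN)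
      (hyj hj hjN))).2
    rw [sub_self, abs_zero, add_zero, abs_of_pos (sub_pos.2 (hx.lt_succ hi hiN))] at this
    linarith
  · exact hmono _ _ _ _ (hxi hi hiN) (hxi hi hiN) (hyj hj hjN.le) (hyj (by omega) hjN)
      le_rfl (hy.lt_succ hj hjN).le
  · have := (abs_le.1 (hlip _ _ _ _ (hxi hi hiN) (hxi hi hiN) (hyj (by omega) hjN)
      (hyj hj hjN.le))).2
    rw [sub_self, abs_zero, zero_add, abs_of_pos (sub_pos.2 (hy.lt_succ hj hjN))] at this
    simp only [Function.swap]
    linarith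

lemma memU_uPL (hN₁ : 2 ≤ N₁) (hN₂ : 2 ≤ N₂) (hx : StrictMonoOn x (Set.Icc 1 N₁))
    (hy : StrictMonoOn y (Set.Icc 1 N₂)) (hL : 0 ≤ L) (hu : memU N₁ N₂ x y L u) :
    memU N₁ N₂ x y L (uPL N₁ N₂ x y fun i j => u (x i) (y j)) := by
  have hg := gridSubmodular_of_memU hx hy hu
  obtain ⟨hgx, hgy⟩ := gridIncrBounded_of_memU hx hy hu
  obtain ⟨-, -, -, hu₀, hu₁, -, -⟩ := hu
  have hlip : ∀ p p' q q', p ∈ Set.Icc (x 1) (x N₁) → p' ∈ Set.Icc (x 1) (x N₁) →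
      q ∈ Set.Icc (y 1) (y N₂) → q' ∈ Set.Icc (y 1) (y N₂) →
      |uPL N₁ N₂ x y (fun i j => u (x i) (y j)) p q -
        uPL N₁ N₂ x y (fun i j => u (x i) (y j)) p' q'| ≤ L * (|p - p'| + |q - q'|) :=
    fun p p' q q' hp hp' hq hq' =>
      abs_uPL_sub_uPL_le hN₁ hN₂ hx hy hg hgx hgy hp hp' hq hq'
  have h₀ : uPL N₁ N₂ x y (fun i j => u (x i) (y j)) (x 1) (y 1) = 0 :=
    (uPL_node hN₁ hN₂ hx hy hg le_rfl (by omega) le_rfl (by omega)).trans hu₀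
  have h₁ : uPL N₁ N₂ x y (fun i j => u (x i) (y j)) (x N₁) (y N₂) = 1 :=
    (uPL_node hN₁ hN₂ hx hy hg (by omega) le_rfl (by omega) le_rfl).trans hu₁
  have hT₁ : x 1 ≤ x N₁ := hx.monotoneOn ⟨le_rfl, by omega⟩ ⟨by omega, le_rfl⟩ (by omega)
  have hT₂ : y 1 ≤ y N₂ := hy.monotoneOn ⟨le_rfl, by omega⟩ ⟨by omega, le_rfl⟩ (by omega)
  refine ⟨continuousOn_of_abs_sub_le hL hlip, fun p p' q q' hp hp' hq hq' hpp' hqq' =>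
    uPL_le_uPL hN₁ hN₂ hx hy hg hgx hgy hp hp' hq hq' hpp' hqq', fun p hp q hq => ⟨?_, ?_⟩,
    h₀, h₁, fun _ _ _ _ ha hab hb hc hcd hd => uPL_add_uPL_le hN₁ hN₂ hx hy hg ha hab hb hc hcd hd,
    hlip⟩
  · exact h₀ ▸ uPL_le_uPL hN₁ hN₂ hx hy hg hgx hgy ⟨le_rfl, hT₁⟩ hp ⟨le_rfl, hT₂⟩ hq hp.1 hq.1
  · exact h₁ ▸ uPL_le_uPL hN₁ hN₂ hx hy hg hgx hgy hp ⟨hT₁, le_rfl⟩ hq ⟨hT₂, le_rfl⟩ hp.2 hq.2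

lemma memUNc_uPL (hN₁ : 2 ≤ N₁) (hN₂ : 2 ≤ N₂) (hx : StrictMonoOn x (Set.Icc 1 N₁))
    (hy : StrictMonoOn y (Set.Icc 1 N₂)) (hL : 0 ≤ L) (hu : memUc N₁ N₂ M x y L a c u) :
    memUNc N₁ N₂ M x y L a c (uPL N₁ N₂ x y fun i j => u (x i) (y j)) := by
  have hnode : ∀ i j, 1 ≤ i → i ≤ N₁ → 1 ≤ j → j ≤ N₂ →
      uPL N₁ N₂ x y (fun i j => u (x i) (y j)) (x i) (y j) = u (x i) (y j) :=
    fun _ _ hi hiN hj hjN =>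
      uPL_node hN₁ hN₂ hx hy (gridSubmodular_of_memU hx hy hu.1) hi hiN hj hjN
  refine ⟨⟨memU_uPL hN₁ hN₂ hx hy hL hu.1, fun l hl => ?_⟩, fun p _ q _ => uPL_congr
    fun i j hi hiN hj hjN => (hnode i j hi hiN hj hjN).symm⟩
  convert hu.2 l hl using 3 with i hi j hj
  rw [Finset.mem_Icc] at hi hj
  rw [hnode i j hi.1 hi.2 hj.1 hj.2]

/-- On each cell both `u` and its interpolant lie between the values of `u` at the lower-left
and upper-right corners, which differ by at most `L` times the ℓ¹-diameter of the cell. -/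
lemma abs_uPL_sub_le (hN₁ : 2 ≤ N₁) (hN₂ : 2 ≤ N₂) (hx : StrictMonoOn x (Set.Icc 1 N₁))
    (hy : StrictMonoOn y (Set.Icc 1 N₂)) (hL : 0 ≤ L) (hu : memU N₁ N₂ x y L u) {β₁ β₂ : ℝ}
    (hβ₁ : ∀ i, 1 ≤ i → i < N₁ → x (i + 1) - x i ≤ β₁)
    (hβ₂ : ∀ j, 1 ≤ j → j < N₂ → y (j + 1) - y j ≤ β₂) {p q : ℝ}
    (hp : p ∈ Set.Icc (x 1) (x N₁)) (hq : q ∈ Set.Icc (y 1) (y N₂)) :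
    |uPL N₁ N₂ x y (fun i j => u (x i) (y j)) p q - u p q| ≤ L * (β₁ + β₂) := by
  have hg := gridSubmodular_of_memU hx hy hu
  obtain ⟨hgx, hgy⟩ := gridIncrBounded_of_memU hx hy hu
  obtain ⟨-, hmono, -, -, -, -, hlip⟩ := hu
  obtain ⟨i, hi, hiN, hpi⟩ := exists_mem_Icc_succ hN₁ hx hp
  obtain ⟨j, hj, hjN, hqj⟩ := exists_mem_Icc_succ hN₂ hy hq
  have hxi := hx.lt_succ hi hiN
  have hyj := hy.lt_succ hj hjN
  have hxl := Icc_succ_subset_Icc hx hi hiN ⟨le_rfl, hxi.le⟩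
  have hxr := Icc_succ_subset_Icc hx hi hiN ⟨hxi.le, le_rfl⟩
  have hyl := Icc_succ_subset_Icc hy hj hjN ⟨le_rfl, hyj.le⟩
  have hyr := Icc_succ_subset_Icc hy hj hjN ⟨hyj.le, le_rfl⟩
  have hlo := uPL_le_uPL hN₁ hN₂ hx hy hg hgx hgy hxl hp hyl hq hpi.1 hqj.1
  have hhi := uPL_le_uPL hN₁ hN₂ hx hy hg hgx hgy hp hxr hq hyr hpi.2 hqj.2
  rw [uPL_node hN₁ hN₂ hx hy hg hi hiN.le hj hjN.le] at hlo
  rw [uPL_node hN₁ hN₂ hx hy hg (by omega) hiN (by omega) hjN] at hhi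
  have hulo := hmono _ _ _ _ hxl hp hyl hq hpi.1 hqj.1
  have huhi := hmono _ _ _ _ hp hxr hq hyr hpi.2 hqj.2
  have hdiam := (abs_le.1 (hlip _ _ _ _ hxr hxl hyr hyl)).2
  rw [abs_of_pos (sub_pos.2 hxi), abs_of_pos (sub_pos.2 hyj)] at hdiam
  have := mul_le_mul_of_nonneg_left (add_le_add (hβ₁ i hi hiN) (hβ₂ j hj hjN)) hL
  rw [abs_sub_le_iff]
  constructor <;> linarith

end memU

lemma abs_ciInf_sub_ciInf_le {ι κ : Type*} [Nonempty ι] [Nonempty κ] {f : ι → ℝ} {g : κ → ℝ}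
    {C : ℝ} (hC : 0 ≤ C) (hfg : ∀ i, ∃ k, g k ≤ f i + C) (hgf : ∀ k, ∃ i, f i ≤ g k + C) :
    |(⨅ i, f i) - ⨅ k, g k| ≤ C := by
  by_cases hf : BddBelow (Set.range f)
  · have hg : BddBelow (Set.range g) := by
      obtain ⟨m, hm⟩ := hf
      refine ⟨m - C, Set.forall_mem_range.2 fun k => ?_⟩
      obtain ⟨i, hi⟩ := hgf k
      linarith [hm (Set.mem_range_self i)]
    have h₁ : (⨅ k, g k) - C ≤ ⨅ i, f i := le_ciInf fun i => by
      obtain ⟨k, hk⟩ := hfg i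
      linarith [ciInf_le hg k]
    have h₂ : (⨅ i, f i) - C ≤ ⨅ k, g k := le_ciInf fun k => by
      obtain ⟨i, hi⟩ := hgf k
      linarith [ciInf_le hf i]
    exact abs_sub_le_iff.2 ⟨by linarith, by linarith⟩
  · have hg : ¬BddBelow (Set.range g) := fun ⟨m, hm⟩ => hf
      ⟨m - C, Set.forall_mem_range.2 fun i => by
        obtain ⟨k, hk⟩ := hfg i
        linarith [hm (Set.mem_range_self k)]⟩
    rwa [Real.iInf_of_not_bddBelow hf, Real.iInf_of_not_bddBelow hg, sub_zero, abs_zero]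

lemma abs_ciSup_sub_ciSup_le {ι : Type*} [Nonempty ι] {f g : ι → ℝ} {C : ℝ}
    (h : ∀ i, |f i - g i| ≤ C) : |(⨆ i, f i) - ⨆ i, g i| ≤ C := by
  have := abs_ciInf_sub_ciInf_le (f := fun i => -1 * f i) (g := fun i => -1 * g i)
    ((abs_nonneg _).trans (h (Classical.arbitrary ι)))
    (fun i => ⟨i, by linarith [(abs_sub_le_iff.1 (h i)).1]⟩)
    (fun i => ⟨i, by linarith [(abs_sub_le_iff.1 (h i)).2]⟩)
  rwa [← Real.mul_iSup_of_nonpos (by norm_num), ← Real.mul_iSup_of_nonpos (by norm_num),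
    ← mul_sub, abs_mul, abs_neg, abs_one, one_mul] at this

lemma sum_mul_le_sum_mul_add {ι : Type*} [Fintype ι] {w v v' : ι → ℝ} {C : ℝ}
    (hw : ∀ k, 0 ≤ w k) (hw₁ : ∑ k, w k = 1) (h : ∀ k, v k ≤ v' k + C) :
    ∑ k, w k * v k ≤ ∑ k, w k * v' k + C :=
  calc ∑ k, w k * v k ≤ ∑ k, w k * (v' k + C) :=
        Finset.sum_le_sum fun k _ => mul_le_mul_of_nonneg_left (h k) (hw k)
    _ = ∑ k, w k * v' k + C := by
      simp only [mul_add, Finset.sum_add_distrib, ← Finset.sum_mul, hw₁, one_mul]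

/-- Error bound on the optimal value of the approximate bi-attribute UPRO problem in the
simple-`ψ` case: `|ϑ − ϑ_N| ≤ 3L(β₁ + β₂)` (the instance of Theorem 5.2(i) in the Example
following Theorem 5.2). -/
theorem theorem52i_optimal_value_error_bound
    (N₁ N₂ M K : ℕ) (hN₁ : 2 ≤ N₁) (hN₂ : 2 ≤ N₂)
    (x y : ℕ → ℝ)
    (hx : ∀ i, 1 ≤ i → i < N₁ → x i < x (i + 1))
    (hy : ∀ j, 1 ≤ j → j < N₂ → y j < y (j + 1))
    (L : ℝ) (hL : 0 < L)
    (a : ℕ → ℕ → ℕ → ℝ) (c : ℕ → ℝ)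
    (Z : Type*) [Nonempty Z]
    (prob : Fin K → ℝ) (hprob : ∀ k, 0 ≤ prob k) (hprobsum : ∑ k, prob k = 1)
    (f : Fin K → Z → ℝ × ℝ)
    (hf : ∀ k z, (f k z).1 ∈ Set.Icc (x 1) (x N₁) ∧ (f k z).2 ∈ Set.Icc (y 1) (y N₂))
    (hUNne : ∃ u : ℝ → ℝ → ℝ, memUNc N₁ N₂ M x y L a c u) :
    let β₁ := (Finset.Icc 1 (N₁ - 1)).sup' (Finset.nonempty_Icc.mpr (by omega))
      (fun i => x (i + 1) - x i)
    let β₂ := (Finset.Icc 1 (N₂ - 1)).sup' (Finset.nonempty_Icc.mpr (by omega))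
      (fun j => y (j + 1) - y j)
    |(⨆ z : Z, ⨅ u : {u : ℝ → ℝ → ℝ // memUc N₁ N₂ M x y L a c u},
        ∑ k, prob k * u.1 (f k z).1 (f k z).2)
      - (⨆ z : Z, ⨅ u : {u : ℝ → ℝ → ℝ // memUNc N₁ N₂ M x y L a c u},
        ∑ k, prob k * u.1 (f k z).1 (f k z).2)|
      ≤ 3 * L * (β₁ + β₂) := by
  intro β₁ β₂
  have hx' := strictMonoOn_Icc_of_lt_succ hx
  have hy' := strictMonoOn_Icc_of_lt_succ hy
  have hβ₁ : ∀ i, 1 ≤ i → i < N₁ → x (i + 1) - x i ≤ β₁ := fun i hi hiN =>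
    Finset.le_sup' (fun i => x (i + 1) - x i) (Finset.mem_Icc.2 ⟨hi, by omega⟩)
  have hβ₂ : ∀ j, 1 ≤ j → j < N₂ → y (j + 1) - y j ≤ β₂ := fun j hj hjN =>
    Finset.le_sup' (fun j => y (j + 1) - y j) (Finset.mem_Icc.2 ⟨hj, by omega⟩)
  have hC : 0 ≤ L * (β₁ + β₂) := mul_nonneg hL.le <| add_nonneg
    ((sub_pos.2 (hx 1 le_rfl (by omega))).le.trans (hβ₁ 1 le_rfl (by omega)))
    ((sub_pos.2 (hy 1 le_rfl (by omega))).le.trans (hβ₂ 1 le_rfl (by omega)))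
  obtain ⟨u₀, hu₀⟩ := hUNne
  have : Nonempty {u : ℝ → ℝ → ℝ // memUc N₁ N₂ M x y L a c u} := ⟨⟨u₀, hu₀.1⟩⟩
  have : Nonempty {u : ℝ → ℝ → ℝ // memUNc N₁ N₂ M x y L a c u} := ⟨⟨u₀, hu₀⟩⟩
  refine (abs_ciSup_sub_ciSup_le (C := L * (β₁ + β₂)) fun z => ?_).trans (by linarith)
  refine abs_ciInf_sub_ciInf_le hC (fun u => ⟨⟨_, memUNc_uPL hN₁ hN₂ hx' hy' hL.le u.2⟩,
    sum_mul_le_sum_mul_add hprob hprobsum fun k => ?_⟩)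
    fun u => ⟨⟨u.1, u.2.1⟩, le_add_of_nonneg_right hC⟩
  exact sub_le_iff_le_add'.1 (abs_sub_le_iff.1 (abs_uPL_sub_le hN₁ hN₂ hx' hy' hL.le u.2.1
    hβ₁ hβ₂ (hf k z).1 (hf k z).2)).1

end
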